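/- arXiv:1504.05239 — 4 statements merged into one kernel-verified Lean document; each statement's English description precedes it below -/
import Mathlib

section
/- Fix τ > 0 and R > 0, and define ζ_R : (0, 2τR] → ℝ by ζ_R(s) = (s(s² + 4τ²R²) + (s² − 4τ²R²)·sin s)/(4τs²). If 2τR ≤ π, then ζ_R(s) ≤ ζ_R(2τR) = R for all s ∈ (0, 2τR]. If 2τR > π, then ζ_R(s) ≤ ζ_R(π) = (π² + 4τ²R²)/(4τπ) for all s ∈ (0, 2τR]. -/
open Real

/-- `sin x ≥ x - x³/6` for `x ≥ 0`. -/
lemma sin_cubic_lb {x : ℝ} (hx : 0 ≤ x) : x - x ^ 3 / 6 ≤ Real.sin x := by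
  have key : ∀ y : ℝ, HasDerivAt (fun t => Real.sin t - t + t ^ 3 / 6)
      (Real.cos y - 1 + 3 * y ^ 2 / 6) y := by
    intro y
    have h1 := ((Real.hasDerivAt_sin y).sub (hasDerivAt_id y)).add
      ((hasDerivAt_pow 3 y).div_const 6)
    exact h1.congr_deriv (by norm_num)
  have mono : MonotoneOn (fun t => Real.sin t - t + t ^ 3 / 6) (Set.Ici 0) := by
    apply monotoneOn_of_deriv_nonneg (convex_Ici 0)
    · exact Continuous.continuousOn (by continuity)
    · intro y _
      exact ((key y).differentiableAt).differentiableWithinAt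
    · intro y _
      rw [(key y).deriv]
      nlinarith [Real.one_sub_sq_div_two_le_cos (x := y)]
  have h0 := mono (Set.self_mem_Ici (a := (0:ℝ))) hx hx
  simp only [Real.sin_zero] at h0
  nlinarith [h0]

/-- Key inequality: `s (π - s) ≤ π sin s` on `[0, π/2]`. -/
lemma keyB' {s : ℝ} (h0 : 0 ≤ s) (h1 : s ≤ π / 2) : s * (π - s) ≤ π * Real.sin s := by
  have hps : π * s ≤ 6 := by nlinarith [Real.pi_lt_d2]
  nlinarith [sin_cubic_lb h0, Real.pi_pos, mul_nonneg (sub_nonneg.2 hps) (sq_nonneg s),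
    mul_le_mul_of_nonneg_left (sin_cubic_lb h0) Real.pi_pos.le]

/-- Key inequality: `s (π - s) ≤ π sin s` on `[0, π]`. -/
lemma keyB {s : ℝ} (h0 : 0 ≤ s) (h1 : s ≤ π) : s * (π - s) ≤ π * Real.sin s := by
  rcases le_or_gt s (π / 2) with h | h
  · exact keyB' h0 h
  · have h0' : 0 ≤ π - s := by linarith
    have h1' : π - s ≤ π / 2 := by linarith
    have := keyB' h0' h1'
    rw [Real.sin_pi_sub] at this
    nlinarith [this]

lemma case1 {a s : ℝ} (hs0 : 0 < s) (hsa : s ≤ a) (haπ : a ≤ π) :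
    s * (s ^ 2 + a ^ 2) + (s ^ 2 - a ^ 2) * Real.sin s ≤ 2 * a * s ^ 2 := by
  have hB := keyB hs0.le (hsa.trans haπ)
  have hsin : 0 ≤ Real.sin s := Real.sin_nonneg_of_nonneg_of_le_pi hs0.le (hsa.trans haπ)
  have h1 : 0 ≤ (a - s) * (a + s) * (π * Real.sin s - s * (π - s)) := by
    apply mul_nonneg (mul_nonneg (by linarith) (by linarith)) (by linarith)
  have h2 : 0 ≤ s ^ 2 * (a - s) * (2 * π - a - s) := by
    apply mul_nonneg (mul_nonneg (sq_nonneg s) (by linarith)) (by linarith)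
  nlinarith [Real.pi_pos, h1, h2]

lemma case2a {a s : ℝ} (hs0 : 0 < s) (hsπ : s ≤ π) (hπa : π < a) :
    π * (s * (s ^ 2 + a ^ 2) + (s ^ 2 - a ^ 2) * Real.sin s) ≤ (π ^ 2 + a ^ 2) * s ^ 2 := by
  have hB := keyB hs0.le hsπ
  have h1 : 0 ≤ (a ^ 2 - s ^ 2) * (π * Real.sin s - s * (π - s)) := by
    apply mul_nonneg (by nlinarith) (by linarith)
  nlinarith [h1, sq_nonneg (s * (π - s))]

lemma case2b {a s : ℝ} (hπs : π < s) (hsa : s ≤ a) :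
    π * (s * (s ^ 2 + a ^ 2) + (s ^ 2 - a ^ 2) * Real.sin s) ≤ (π ^ 2 + a ^ 2) * s ^ 2 := by
  have hπ := Real.pi_pos
  have hsin : π - s ≤ Real.sin s := by
    have h1 : Real.sin (s - π) ≤ s - π := Real.sin_le (by linarith)
    rw [Real.sin_sub_pi] at h1
    linarith
  have h3 : 0 ≤ (a ^ 2 - s ^ 2) * (Real.sin s - (π - s)) := by
    apply mul_nonneg (by nlinarith) (by linarith)
  nlinarith [mul_nonneg hπ.le h3, sq_nonneg (a * (s - π))]

/-- The maximum of the function `ζ_R` governing the height of geodesic balls in `Nil₃(τ)`: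
if `2τR ≤ π` the maximum over `(0, 2τR]` is attained at `s = 2τR` with value `R`;
if `2τR > π` it is attained at `s = π` with value `(π² + 4τ²R²)/(4τπ)`. -/
theorem stmt0 (τ R : ℝ) (hτ : 0 < τ) (hR : 0 < R) (ζ : ℝ → ℝ)
    (hζ : ∀ s : ℝ, ζ s =
      (s * (s ^ 2 + 4 * τ ^ 2 * R ^ 2) + (s ^ 2 - 4 * τ ^ 2 * R ^ 2) * Real.sin s) /
        (4 * τ * s ^ 2)) :
    (2 * τ * R ≤ π →
      ζ (2 * τ * R) = R ∧ ∀ s ∈ Set.Ioc (0 : ℝ) (2 * τ * R), ζ s ≤ ζ (2 * τ * R)) ∧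
    (π < 2 * τ * R →
      ζ π = (π ^ 2 + 4 * τ ^ 2 * R ^ 2) / (4 * τ * π) ∧
        ∀ s ∈ Set.Ioc (0 : ℝ) (2 * τ * R), ζ s ≤ ζ π) := by
  have hπ := Real.pi_pos
  have ha : 0 < 2 * τ * R := by positivity
  have hvala : ζ (2 * τ * R) = R := by
    rw [hζ, div_eq_iff (by positivity)]
    ring
  have hvalπ : ζ π = (π ^ 2 + 4 * τ ^ 2 * R ^ 2) / (4 * τ * π) := by
    rw [hζ, Real.sin_pi, mul_zero, add_zero,
      div_eq_div_iff (by positivity) (by positivity)]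
    ring
  constructor
  · intro hle
    refine ⟨hvala, fun s hs => ?_⟩
    obtain ⟨hs0, hsa⟩ := hs
    rw [hvala, hζ, div_le_iff₀ (by positivity)]
    have := case1 (a := 2 * τ * R) hs0 hsa hle
    nlinarith [this]
  · intro hlt
    refine ⟨hvalπ, fun s hs => ?_⟩
    obtain ⟨hs0, hsa⟩ := hs
    rw [hvalπ, hζ, div_le_div_iff₀ (by positivity) (by positivity)]
    rcases le_or_gt s π with hsπ | hsπ
    · have h := case2a (a := 2 * τ * R) hs0 hsπ hlt
      nlinarith [mul_le_mul_of_nonneg_left h (by positivity : (0:ℝ) ≤ 4 * τ)]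
    · have h := case2b (a := 2 * τ * R) hsπ hsa
      nlinarith [mul_le_mul_of_nonneg_left h (by positivity : (0:ℝ) ≤ 4 * τ)]
end

section
/- Fix τ > 0 and R > 0, and let u ∈ C^∞(D_R(0)) extend continuously to the closed disk D̄_R(0). Then ∫_{D_R(0)} W_u dA ≥ ∫_{D_R(0)} √(1 + τ²(x² + y²)) dA = (2π/(3τ²))·((1 + τ²R²)^{3/2} − 1), and equality holds if and only if u is constant. -/
open MeasureTheory Real Filter

noncomputable section

/-- The Euclidean plane, base of the Riemannian submersion `Nil₃(τ) → ℝ²`. -/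
abbrev E2 := EuclideanSpace ℝ (Fin 2)

/-- Partial derivative of `f : ℝ² → ℝ` in the `i`-th coordinate direction. -/
def pd (i : Fin 2) (f : E2 → ℝ) (p : E2) : ℝ := fderiv ℝ f p (EuclideanSpace.single i 1)

/-- First component of the vector field `Gu = ∇u + (τy, −τx)`. -/
def G1 (τ : ℝ) (u : E2 → ℝ) (p : E2) : ℝ := pd 0 u p + τ * p 1

/-- Second component of the vector field `Gu = ∇u + (τy, −τx)`. -/
def G2 (τ : ℝ) (u : E2 → ℝ) (p : E2) : ℝ := pd 1 u p - τ * p 0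

/-- The area element `W_u = √(1 + |Gu|²)` of the graph of `u` in `Nil₃(τ)`. -/
def W (τ : ℝ) (u : E2 → ℝ) (p : E2) : ℝ :=
  Real.sqrt (1 + ((G1 τ u p) ^ 2 + (G2 τ u p) ^ 2))

/-- The minimal graph equation `div (Gu / W_u) = 0` on `Ω` (for `τ = 0` this is the
classical minimal surface equation `div (∇u / √(1+|∇u|²)) = 0`). -/
def MinimalGraphNil (τ : ℝ) (u : E2 → ℝ) (Ω : Set E2) : Prop :=
  ∀ p ∈ Ω, pd 0 (fun q => G1 τ u q / W τ u q) p + pd 1 (fun q => G2 τ u q / W τ u q) p = 0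

open Set

/-- The continuous linear identification of `ℝ × ℝ` with `E2`. -/
def Cq : (ℝ × ℝ) ≃L[ℝ] E2 :=
  (ContinuousLinearEquiv.finTwoArrow ℝ ℝ).symm.trans (EuclideanSpace.equiv (Fin 2) ℝ).symm

lemma Cq_apply0 (q : ℝ × ℝ) : Cq q 0 = q.1 := rfl
lemma Cq_apply1 (q : ℝ × ℝ) : Cq q 1 = q.2 := rfl

lemma Cq_eq_single (q : ℝ × ℝ) :
    Cq q = q.1 • EuclideanSpace.single 0 1 + q.2 • EuclideanSpace.single 1 1 := by
  ext i
  fin_cases i <;>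
    simp [Cq_apply0, Cq_apply1, EuclideanSpace.single_apply]

def disk (s : ℝ) : Set (ℝ × ℝ) := {q | q.1 ^ 2 + q.2 ^ 2 < s ^ 2}

lemma isOpen_disk (s : ℝ) : IsOpen (disk s) :=
  isOpen_lt (by continuity) continuous_const

lemma measurableSet_disk (s : ℝ) : MeasurableSet (disk s) := (isOpen_disk s).measurableSet

lemma norm_symm_sq (r θ : ℝ) :
    (polarCoord.symm (r, θ)).1 ^ 2 + (polarCoord.symm (r, θ)).2 ^ 2 = r ^ 2 := by
  have h : polarCoord.symm (r, θ) = (r * cos θ, r * sin θ) := rfl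
  rw [h]
  have := sin_sq_add_cos_sq θ
  dsimp only
  nlinarith [this]

lemma continuous_polarCoord_symm' : Continuous (fun p : ℝ × ℝ => polarCoord.symm p) := by
  have : (fun p : ℝ × ℝ => polarCoord.symm p)
      = fun p : ℝ × ℝ => (p.1 * cos p.2, p.1 * sin p.2) := rfl
  rw [this]; fun_prop

lemma polar_disk (s : ℝ) (hs : 0 < s) (F : ℝ × ℝ → ℝ) (hF : Measurable F)
    (M : ℝ) (hM : ∀ q ∈ disk s, |F q| ≤ M) :
    ∫ q in disk s, F q =
      ∫ r in Ioo (0:ℝ) s, ∫ θ in Ioo (-π) π, r * F (polarCoord.symm (r, θ)) := by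
  have hMdisk : ∀ r θ : ℝ, 0 ≤ r → r < s → polarCoord.symm (r, θ) ∈ disk s := by
    intro r θ hr hrs
    simp only [disk, mem_setOf_eq]
    rw [norm_symm_sq r θ]
    nlinarith
  have hnotdisk : ∀ r θ : ℝ, 0 ≤ r → s ≤ r → polarCoord.symm (r, θ) ∉ disk s := by
    intro r θ hr hrs
    simp only [disk, mem_setOf_eq, not_lt]
    rw [norm_symm_sq r θ]
    nlinarith
  set g : ℝ × ℝ → ℝ := (disk s).indicator F with hg
  have h1 : ∫ q in disk s, F q = ∫ q, g q := (integral_indicator (measurableSet_disk s)).symm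
  rw [h1, ← integral_comp_polarCoord_symm g]
  set T' : Set (ℝ × ℝ) := Ioo (0:ℝ) s ×ˢ Ioo (-π) π with hT'
  have hT'meas : MeasurableSet T' := measurableSet_Ioo.prod measurableSet_Ioo
  have htarget : polarCoord.target = Ioi (0:ℝ) ×ˢ Ioo (-π) π := rfl
  have hcongr : ∀ p ∈ polarCoord.target,
      p.1 • g (polarCoord.symm p) = T'.indicator (fun p => p.1 * F (polarCoord.symm p)) p := by
    rintro ⟨r, θ⟩ hp
    rw [htarget] at hp
    obtain ⟨hr, hθ⟩ := hp
    simp only [mem_Ioi] at hr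
    by_cases hrs : r < s
    · have hmem : (r, θ) ∈ T' := ⟨⟨hr, hrs⟩, hθ⟩
      rw [indicator_of_mem hmem]
      simp only [hg, indicator_of_mem (hMdisk r θ hr.le hrs), smul_eq_mul]
    · have hmem : (r, θ) ∉ T' := by
        intro h; exact hrs h.1.2
      rw [indicator_of_notMem hmem]
      simp only [hg, indicator_of_notMem (hnotdisk r θ hr.le (not_lt.mp hrs)), smul_zero]
  rw [setIntegral_congr_fun polarCoord.open_target.measurableSet hcongr]
  rw [setIntegral_indicator hT'meas]
  have hTT : polarCoord.target ∩ T' = T' := by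
    rw [htarget, hT']
    ext ⟨r, θ⟩
    simp only [mem_inter_iff, mem_prod, mem_Ioi, mem_Ioo, and_iff_right_iff_imp]
    rintro ⟨⟨h1, h2⟩, h3⟩
    exact ⟨h1, h3⟩
  rw [hTT]
  -- Fubini
  have hmeas : Measurable (fun p : ℝ × ℝ => p.1 * F (polarCoord.symm p)) :=
    measurable_fst.mul (hF.comp continuous_polarCoord_symm'.measurable)
  have hMnn : 0 ≤ M := le_trans (abs_nonneg _) (hM (0,0) (by simp [disk]; positivity))
  have hfin : volume T' ≠ ⊤ := by
    rw [hT', Measure.volume_eq_prod, Measure.prod_prod]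
    exact ENNReal.mul_ne_top (by simp [Real.volume_Ioo]) (by simp [Real.volume_Ioo])
  have hint : IntegrableOn (fun p : ℝ × ℝ => p.1 * F (polarCoord.symm p)) T' := by
    apply Measure.integrableOn_of_bounded hfin hmeas.aestronglyMeasurable (M := s * M)
    filter_upwards [ae_restrict_mem hT'meas] with p hp
    obtain ⟨hp1, hp2⟩ := hp
    rw [Real.norm_eq_abs, abs_mul]
    have h1 : |p.1| ≤ s := by
      rw [abs_of_pos hp1.1]; exact hp1.2.le
    have h2 : |F (polarCoord.symm p)| ≤ M := hM _ (hMdisk p.1 p.2 hp1.1.le hp1.2)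
    exact mul_le_mul h1 h2 (abs_nonneg _) hs.le
  rw [hT', Measure.volume_eq_prod ℝ ℝ, setIntegral_prod _ (by rwa [← Measure.volume_eq_prod])]

def Phi : E2 ≃ᵐ ℝ × ℝ :=
  (MeasurableEquiv.toLp 2 (Fin 2 → ℝ)).symm.trans MeasurableEquiv.finTwoArrow

lemma Phi_apply (p : E2) : Phi p = (p 0, p 1) := rfl

lemma Phi_mp : MeasurePreserving Phi volume volume :=
  (volume_preserving_finTwoArrow ℝ).comp (EuclideanSpace.volume_preserving_symm_measurableEquiv_toLp (Fin 2))

lemma Cq_Phi (p : E2) : Cq (Phi p) = p := by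
  ext i; fin_cases i
  · exact Cq_apply0 _
  · exact Cq_apply1 _

lemma mem_ball_iff_disk (s : ℝ) (hs : 0 < s) (p : E2) :
    p ∈ Metric.ball (0 : E2) s ↔ ((p 0), (p 1)) ∈ disk s := by
  rw [Metric.mem_ball, dist_zero_right, disk, mem_setOf_eq]
  have hn : ‖p‖ ^ 2 = (p 0) ^ 2 + (p 1) ^ 2 := by
    rw [EuclideanSpace.norm_eq, Real.sq_sqrt (by positivity)]
    simp [Fin.sum_univ_two, sq_abs]
  rw [← hn]
  exact (pow_lt_pow_iff_left₀ (norm_nonneg p) hs.le (by norm_num)).symm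

lemma ball_integral_eq_disk (s : ℝ) (hs : 0 < s) (f : E2 → ℝ) :
    ∫ p in Metric.ball (0:E2) s, f p = ∫ q in disk s, f (Cq q) := by
  rw [← integral_indicator Metric.isOpen_ball.measurableSet,
      ← integral_indicator (measurableSet_disk s)]
  rw [show (∫ p, (Metric.ball (0:E2) s).indicator f p) =
      ∫ p, ((disk s).indicator (fun q => f (Cq q))) (Phi p) from ?_]
  · exact Phi_mp.integral_comp' (f := Phi) _
  · congr 1
    funext p
    by_cases h : p ∈ Metric.ball (0:E2) s
    · rw [indicator_of_mem h, Phi_apply, indicator_of_mem ((mem_ball_iff_disk s hs p).mp h)]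
      rw [show Cq (p 0, p 1) = p from Cq_Phi p]
    · rw [indicator_of_notMem h, Phi_apply,
        indicator_of_notMem (fun hc => h ((mem_ball_iff_disk s hs p).mpr hc))]

lemma ftc_radial (τ R : ℝ) (hτ : 0 < τ) (hR : 0 < R) :
    ∫ r in (0:ℝ)..R, r * Real.sqrt (1 + τ^2 * r^2) =
      (3 * τ^2)⁻¹ * ((1 + τ^2 * R^2) ^ ((3:ℝ)/2) - 1) := by
  have hderiv : ∀ r ∈ Set.uIcc (0:ℝ) R,
      HasDerivAt (fun r => (3 * τ^2)⁻¹ * (1 + τ^2 * r^2) ^ ((3:ℝ)/2))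
        (r * Real.sqrt (1 + τ^2 * r^2)) r := by
    intro r _
    have hpos : (0:ℝ) < 1 + τ^2 * r^2 := by positivity
    have hf : HasDerivAt (fun r : ℝ => 1 + τ^2 * r^2) (2 * τ^2 * r) r := by
      have := ((hasDerivAt_pow 2 r).const_mul (τ^2)).const_add 1
      simpa [mul_comm, mul_assoc, mul_left_comm] using this
    have h2 := (hf.rpow_const (p := (3:ℝ)/2) (Or.inl hpos.ne'))
    have h3 := h2.const_mul (3 * τ^2)⁻¹
    refine h3.congr_deriv ?_
    rw [show ((3:ℝ)/2 - 1) = (1:ℝ)/2 by norm_num, ← Real.sqrt_eq_rpow]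
    field_simp
  rw [intervalIntegral.integral_eq_sub_of_hasDerivAt hderiv ?_]
  · norm_num
    ring
  · apply Continuous.intervalIntegrable
    fun_prop

lemma integral_W0_ball (τ R : ℝ) (hτ : 0 < τ) (hR : 0 < R) :
    ∫ p in Metric.ball (0:E2) R, Real.sqrt (1 + τ^2 * ((p 0)^2 + (p 1)^2)) =
      (2 * π / (3 * τ^2)) * ((1 + τ^2 * R^2) ^ ((3:ℝ)/2) - 1) := by
  rw [ball_integral_eq_disk R hR]
  have hCq : ∀ q : ℝ × ℝ, Real.sqrt (1 + τ^2 * ((Cq q 0)^2 + (Cq q 1)^2))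
      = Real.sqrt (1 + τ^2 * (q.1^2 + q.2^2)) := fun q => rfl
  simp only [hCq]
  rw [polar_disk R hR _ (by fun_prop) (Real.sqrt (1 + τ^2 * R^2)) ?_]
  · have hinner : ∀ r ∈ Ioo (0:ℝ) R,
        (∫ θ in Ioo (-π) π,
          r * Real.sqrt (1 + τ^2 * ((polarCoord.symm (r, θ)).1^2 + (polarCoord.symm (r, θ)).2^2)))
        = (2 * π) * (r * Real.sqrt (1 + τ^2 * r^2)) := by
      intro r _
      have : ∀ θ : ℝ, r * Real.sqrt (1 + τ^2 * ((polarCoord.symm (r, θ)).1^2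
          + (polarCoord.symm (r, θ)).2^2)) = r * Real.sqrt (1 + τ^2 * r^2) := by
        intro θ; rw [norm_symm_sq r θ]
      simp only [this]
      rw [setIntegral_const, Real.volume_real_Ioo_of_le (by linarith [Real.pi_pos]), smul_eq_mul]
      congr 1
      ring
    rw [setIntegral_congr_fun measurableSet_Ioo hinner]
    rw [← MeasureTheory.integral_Ioc_eq_integral_Ioo, ← intervalIntegral.integral_of_le hR.le]
    rw [intervalIntegral.integral_const_mul, ftc_radial τ R hτ hR]
    ring
  · intro q hq
    rw [abs_of_nonneg (Real.sqrt_nonneg _)]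
    apply Real.sqrt_le_sqrt
    have : q.1^2 + q.2^2 < R^2 := hq
    nlinarith [sq_nonneg τ]

lemma measurable_pd (i : Fin 2) (f : E2 → ℝ) : Measurable (pd i f) :=
  measurable_fderiv_apply_const ℝ f _

lemma fderiv_apply_Cq (f : E2 → ℝ) (p : E2) (v : ℝ × ℝ) :
    fderiv ℝ f p (Cq v) = v.1 * pd 0 f p + v.2 * pd 1 f p := by
  rw [Cq_eq_single, map_add, (fderiv ℝ f p).map_smul, (fderiv ℝ f p).map_smul,
    smul_eq_mul, smul_eq_mul]
  rfl

lemma abs_le_of_sq_le' {a b : ℝ} (hb : 0 ≤ b) (h : a^2 ≤ b^2) : |a| ≤ b := by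
  rcases abs_cases a with ⟨h1, _⟩ | ⟨h1, _⟩ <;> nlinarith

section circ

variable (τ R : ℝ) (u : E2 → ℝ)

/-- The circulation integrand. -/
def A (p : E2) : ℝ :=
    (p 1 * pd 0 u p - p 0 * pd 1 u p) / Real.sqrt (1 + τ^2 * ((p 0)^2 + (p 1)^2))

lemma contOn_pd (hu : ContDiffOn ℝ (⊤ : ℕ∞) u (Metric.ball 0 R)) (i : Fin 2) :
    ContinuousOn (pd i u) (Metric.ball (0:E2) R) := by
  have h := hu.continuousOn_fderiv_of_isOpen Metric.isOpen_ball (by exact_mod_cast (le_top : (1:ℕ∞) ≤ ⊤))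
  exact h.clm_apply continuousOn_const

lemma contOn_A (hu : ContDiffOn ℝ (⊤ : ℕ∞) u (Metric.ball 0 R)) :
    ContinuousOn (A τ u) (Metric.ball (0:E2) R) := by
  apply ContinuousOn.div
  · apply ContinuousOn.sub
    · exact ((PiLp.continuous_apply 2 _ (1 : Fin 2)).continuousOn).mul (contOn_pd R u hu 0)
    · exact ((PiLp.continuous_apply 2 _ (0 : Fin 2)).continuousOn).mul (contOn_pd R u hu 1)
  · fun_prop
  · intro p _
    positivity

lemma circulation (hτ : 0 < τ) (hR : 0 < R) (hu : ContDiffOn ℝ (⊤ : ℕ∞) u (Metric.ball 0 R))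
    (s : ℝ) (hs : 0 < s) (hsR : s < R) :
    ∫ p in Metric.ball (0:E2) s, A τ u p = 0 := by
  rw [ball_integral_eq_disk s hs]
  set F : ℝ × ℝ → ℝ := fun q => A τ u (Cq q) with hF
  have hFmeas : Measurable F := by
    apply Measurable.div
    · apply Measurable.sub
      · exact measurable_snd.mul ((measurable_pd 0 u).comp Cq.continuous.measurable)
      · exact measurable_fst.mul ((measurable_pd 1 u).comp Cq.continuous.measurable)
    · fun_prop
  -- compact set and bound
  set K : Set (ℝ × ℝ) := {q | q.1^2 + q.2^2 ≤ s^2} with hK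
  have hKsub : ∀ q ∈ K, Cq q ∈ Metric.ball (0:E2) R := by
    intro q hq
    rw [mem_ball_iff_disk R hR]
    have h1 : (Cq q 0) = q.1 := rfl
    have h2 : (Cq q 1) = q.2 := rfl
    simp only [disk, mem_setOf_eq, h1, h2]
    have : q.1^2 + q.2^2 ≤ s^2 := hq
    nlinarith
  have hKc : IsCompact K := by
    apply Metric.isCompact_of_isClosed_isBounded
    · exact isClosed_le (by fun_prop) continuous_const
    · apply Bornology.IsBounded.subset (Metric.isBounded_closedBall (x := (0:ℝ×ℝ)) (r := s))
      intro q hq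
      have hq' : q.1^2 + q.2^2 ≤ s^2 := hq
      simp only [Metric.mem_closedBall, dist_zero_right, Prod.norm_def, max_le_iff,
        Real.norm_eq_abs]
      constructor
      · exact abs_le_of_sq_le' hs.le (by nlinarith [sq_nonneg q.2])
      · exact abs_le_of_sq_le' hs.le (by nlinarith [sq_nonneg q.1])
  have hFcont : ContinuousOn F K := by
    apply (contOn_A τ R u hu).comp Cq.continuous.continuousOn
    intro q hq; exact hKsub q hq
  obtain ⟨M, hM⟩ := hKc.exists_bound_of_continuousOn hFcont
  rw [polar_disk s hs F hFmeas M (fun q hq => by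
    have hq' : q.1^2 + q.2^2 < s^2 := hq
    exact (Real.norm_eq_abs _ ▸ hM q (le_of_lt hq' : q ∈ K)))]
  have hinner2 : ∀ r ∈ Ioo (0:ℝ) s, (∫ θ in Ioo (-π) π, r * F (polarCoord.symm (r, θ))) = 0 := by
    intro r hr
    set γ : ℝ → E2 := fun θ => Cq (r * cos θ, r * sin θ) with hγ
    have hγball : ∀ θ, γ θ ∈ Metric.ball (0:E2) R := by
      intro θ
      rw [mem_ball_iff_disk R hR]
      have h1 : (γ θ) 0 = r * cos θ := rfl
      have h2 : (γ θ) 1 = r * sin θ := rfl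
      simp only [disk, mem_setOf_eq, h1, h2]
      nlinarith [sin_sq_add_cos_sq θ, hr.1, hr.2, hsR, sq_nonneg r]
    set ψ : ℝ → ℝ := fun θ => (r * sin θ) * pd 0 u (γ θ) - (r * cos θ) * pd 1 u (γ θ) with hψ
    have hFeq : ∀ θ : ℝ, F (polarCoord.symm (r, θ)) = ψ θ / Real.sqrt (1 + τ^2 * r^2) := by
      intro θ
      have heq : (1 : ℝ) + τ^2 * ((r * cos θ)^2 + (r * sin θ)^2) = 1 + τ^2 * r^2 := by
        linear_combination (τ^2 * r^2) * (sin_sq_add_cos_sq θ)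
      show ((r * sin θ) * pd 0 u (γ θ) - (r * cos θ) * pd 1 u (γ θ)) /
          Real.sqrt (1 + τ^2 * ((r * cos θ)^2 + (r * sin θ)^2)) = _
      rw [heq]
    have hg : ∀ θ : ℝ, HasDerivAt (fun t => u (γ t)) (-ψ θ) θ := by
      intro θ
      have hpair : HasDerivAt (fun t : ℝ => (r * cos t, r * sin t))
          (r * (-sin θ), r * cos θ) θ :=
        (HasDerivAt.const_mul r (hasDerivAt_cos θ)).prodMk
          (HasDerivAt.const_mul r (hasDerivAt_sin θ))
      have hγd : HasDerivAt γ (Cq (r * (-sin θ), r * cos θ)) θ :=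
        (Cq : (ℝ×ℝ) →L[ℝ] E2).hasFDerivAt.comp_hasDerivAt θ hpair
      have hud : HasFDerivAt u (fderiv ℝ u (γ θ)) (γ θ) :=
        ((hu.differentiableOn (by simp)).differentiableAt
          (Metric.isOpen_ball.mem_nhds (hγball θ))).hasFDerivAt
      have hcomp := hud.comp_hasDerivAt θ hγd
      refine hcomp.congr_deriv ?_
      rw [fderiv_apply_Cq]
      simp only [hψ]
      ring
    have hγcont : Continuous γ :=
      Cq.continuous.comp (by fun_prop)
    have hψcont : Continuous ψ := by
      apply Continuous.sub
      · exact (continuous_const.mul continuous_sin).mul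
          ((contOn_pd R u hu 0).comp_continuous hγcont hγball)
      · exact (continuous_const.mul continuous_cos).mul
          ((contOn_pd R u hu 1).comp_continuous hγcont hγball)
    have hγper : γ π = γ (-π) := by
      have heq2 : (r * cos π, r * sin π) = (r * cos (-π), r * sin (-π)) := by
        rw [Real.cos_neg, Real.sin_neg, Real.sin_pi]
        norm_num
      simp only [hγ, heq2]
    have hFTC : ∫ t in (-π)..π, -ψ t = u (γ π) - u (γ (-π)) :=
      intervalIntegral.integral_eq_sub_of_hasDerivAt (fun t _ => hg t)
        (hψcont.neg.intervalIntegrable _ _)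
    have hψint : ∫ t in (-π)..π, ψ t = 0 := by
      have h0 : ∫ t in (-π)..π, -ψ t = 0 := by rw [hFTC, hγper, sub_self]
      rw [intervalIntegral.integral_neg] at h0
      linarith
    calc ∫ θ in Ioo (-π) π, r * F (polarCoord.symm (r, θ))
        = ∫ θ in Ioo (-π) π, (r / Real.sqrt (1 + τ^2*r^2)) * ψ θ := by
          apply setIntegral_congr_fun measurableSet_Ioo
          intro θ _
          show r * F (polarCoord.symm (r, θ)) = r / Real.sqrt (1 + τ^2*r^2) * ψ θ
          rw [hFeq θ]; ring
      _ = (r / Real.sqrt (1 + τ^2*r^2)) * ∫ θ in Ioo (-π) π, ψ θ :=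
          integral_const_mul _ _
      _ = 0 := by
          rw [← MeasureTheory.integral_Ioc_eq_integral_Ioo,
            ← intervalIntegral.integral_of_le (by linarith [Real.pi_pos] : -π ≤ π), hψint,
            mul_zero]
  calc ∫ r in Ioo (0:ℝ) s, ∫ θ in Ioo (-π) π, r * F (polarCoord.symm (r, θ))
      = ∫ _r in Ioo (0:ℝ) s, (0:ℝ) :=
        setIntegral_congr_fun measurableSet_Ioo (fun r hr => hinner2 r hr)
    _ = 0 := integral_zero _ _

end circ


lemma cs_ineq (a b c d : ℝ) :
    1 + (a*c + b*d) ≤ Real.sqrt (1 + (a^2 + b^2)) * Real.sqrt (1 + (c^2 + d^2)) := by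
  rcases le_or_gt (1 + (a*c + b*d)) 0 with h | h
  · exact h.trans (by positivity)
  · rw [← Real.sqrt_mul (by positivity)]
    rw [show Real.sqrt ((1 + (a^2+b^2)) * (1 + (c^2+d^2)))
        = Real.sqrt ((1 + (a*c+b*d))^2 + ((a-c)^2 + (b-d)^2 + (a*d - b*c)^2)) by ring_nf]
    calc 1 + (a*c + b*d) = Real.sqrt ((1 + (a*c+b*d))^2) := by
          rw [Real.sqrt_sq h.le]
      _ ≤ _ := Real.sqrt_le_sqrt (by nlinarith [sq_nonneg (a-c), sq_nonneg (b-d), sq_nonneg (a*d-b*c)])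

lemma cs_eq (a b c d : ℝ)
    (h : 1 + (a*c + b*d) = Real.sqrt (1 + (a^2 + b^2)) * Real.sqrt (1 + (c^2 + d^2))) :
    a = c ∧ b = d := by
  have h2 : (1 + (a*c+b*d))^2 = (1 + (a^2+b^2)) * (1 + (c^2+d^2)) := by
    rw [h, mul_pow, Real.sq_sqrt (by positivity), Real.sq_sqrt (by positivity)]
  have key : (a-c)^2 + (b-d)^2 + (a*d - b*c)^2 = 0 := by nlinarith
  constructor
  · nlinarith [sq_nonneg (a-c), sq_nonneg (b-d), sq_nonneg (a*d-b*c)]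
  · nlinarith [sq_nonneg (a-c), sq_nonneg (b-d), sq_nonneg (a*d-b*c)]


lemma calib_identity (τ : ℝ) (u : E2 → ℝ) (p : E2) :
    Real.sqrt (1 + τ^2 * ((p 0)^2 + (p 1)^2)) + τ * A τ u p =
      (1 + (G1 τ u p * (τ * p 1) + G2 τ u p * (-(τ * p 0)))) /
        Real.sqrt (1 + τ^2 * ((p 0)^2 + (p 1)^2)) := by
  have hS : (0:ℝ) < 1 + τ^2 * ((p 0)^2 + (p 1)^2) := by positivity
  have hW0 : (0:ℝ) < Real.sqrt (1 + τ^2 * ((p 0)^2 + (p 1)^2)) := Real.sqrt_pos.mpr hS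
  have hsq : Real.sqrt (1 + τ^2 * ((p 0)^2 + (p 1)^2)) ^ 2 = 1 + τ^2 * ((p 0)^2 + (p 1)^2) :=
    Real.sq_sqrt hS.le
  simp only [A, G1, G2]
  field_simp
  nlinarith [hsq]

lemma calib_le (τ : ℝ) (u : E2 → ℝ) (p : E2) :
    Real.sqrt (1 + τ^2 * ((p 0)^2 + (p 1)^2)) + τ * A τ u p ≤ W τ u p := by
  rw [calib_identity]
  have hS : (0:ℝ) < 1 + τ^2 * ((p 0)^2 + (p 1)^2) := by positivity
  have hW0 : (0:ℝ) < Real.sqrt (1 + τ^2 * ((p 0)^2 + (p 1)^2)) := Real.sqrt_pos.mpr hS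
  rw [div_le_iff₀ hW0]
  have hcs := cs_ineq (G1 τ u p) (G2 τ u p) (τ * p 1) (-(τ * p 0))
  have hsq : (1:ℝ) + ((τ * p 1)^2 + (-(τ * p 0))^2) = 1 + τ^2 * ((p 0)^2 + (p 1)^2) := by ring
  rw [hsq] at hcs
  exact hcs

lemma calib_eq (τ : ℝ) (u : E2 → ℝ) (p : E2)
    (h : Real.sqrt (1 + τ^2 * ((p 0)^2 + (p 1)^2)) + τ * A τ u p = W τ u p)
    (hτ : 0 < τ) : pd 0 u p = 0 ∧ pd 1 u p = 0 := by
  rw [calib_identity] at h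
  have hS : (0:ℝ) < 1 + τ^2 * ((p 0)^2 + (p 1)^2) := by positivity
  have hW0 : (0:ℝ) < Real.sqrt (1 + τ^2 * ((p 0)^2 + (p 1)^2)) := Real.sqrt_pos.mpr hS
  rw [div_eq_iff hW0.ne'] at h
  have hsq : (1:ℝ) + ((τ * p 1)^2 + (-(τ * p 0))^2) = 1 + τ^2 * ((p 0)^2 + (p 1)^2) := by ring
  have h' : 1 + (G1 τ u p * (τ * p 1) + G2 τ u p * (-(τ * p 0))) =
      Real.sqrt (1 + ((G1 τ u p)^2 + (G2 τ u p)^2)) *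
        Real.sqrt (1 + ((τ * p 1)^2 + (-(τ * p 0))^2)) := by
    rw [hsq, h, W]
  obtain ⟨h1, h2⟩ := cs_eq _ _ _ _ h'
  constructor
  · have : pd 0 u p + τ * p 1 = τ * p 1 := h1
    linarith
  · have : pd 1 u p - τ * p 0 = -(τ * p 0) := h2
    linarith

section main
variable (τ R : ℝ) (u : E2 → ℝ)

def W0f (τ : ℝ) (p : E2) : ℝ := Real.sqrt (1 + τ^2 * ((p 0)^2 + (p 1)^2))

def Df (τ : ℝ) (u : E2 → ℝ) (p : E2) : ℝ := W τ u p - (W0f τ p + τ * A τ u p)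

lemma Df_nonneg (p : E2) : 0 ≤ Df τ u p := by
  have := calib_le τ u p
  simp only [Df, W0f]
  linarith

lemma cont_W0f : Continuous (W0f τ) := by
  apply Real.continuous_sqrt.comp
  have h0 : Continuous (fun p : E2 => p 0) := PiLp.continuous_apply 2 _ _
  have h1 : Continuous (fun p : E2 => p 1) := PiLp.continuous_apply 2 _ _
  fun_prop

lemma contOn_W (hu : ContDiffOn ℝ (⊤ : ℕ∞) u (Metric.ball 0 R)) :
    ContinuousOn (W τ u) (Metric.ball (0:E2) R) := by
  apply Real.continuous_sqrt.comp_continuousOn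
  apply ContinuousOn.add continuousOn_const
  apply ContinuousOn.add
  · apply ContinuousOn.pow
    exact (contOn_pd R u hu 0).add ((continuous_const.mul (PiLp.continuous_apply 2 _ _)).continuousOn)
  · apply ContinuousOn.pow
    exact (contOn_pd R u hu 1).sub ((continuous_const.mul (PiLp.continuous_apply 2 _ _)).continuousOn)

lemma integrableOn_ball_of_contOn {f : E2 → ℝ} (hf : ContinuousOn f (Metric.ball (0:E2) R))
    {s : ℝ} (hsR : s < R) : IntegrableOn f (Metric.ball (0:E2) s) :=
  ((hf.mono (Metric.closedBall_subset_ball hsR)).integrableOn_compact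
    (isCompact_closedBall _ _)).mono_set Metric.ball_subset_closedBall

lemma measurable_W : Measurable (W τ u) := by
  apply Real.continuous_sqrt.measurable.comp
  apply Measurable.add measurable_const
  apply Measurable.add
  · exact ((measurable_pd 0 u).add (measurable_const.mul (PiLp.continuous_apply 2 _ _).measurable)).pow_const 2
  · exact ((measurable_pd 1 u).sub (measurable_const.mul (PiLp.continuous_apply 2 _ _).measurable)).pow_const 2

lemma measurable_A : Measurable (A τ u) := by
  apply Measurable.div
  · exact ((PiLp.continuous_apply 2 _ _).measurable.mul (measurable_pd 0 u)).sub
      ((PiLp.continuous_apply 2 _ _).measurable.mul (measurable_pd 1 u))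
  · exact (cont_W0f τ).measurable

lemma measurable_Df : Measurable (Df τ u) :=
  (measurable_W τ u).sub ((cont_W0f τ).measurable.add (measurable_const.mul (measurable_A τ u)))

lemma decomp_ball (hτ : 0 < τ) (hR : 0 < R) (hu : ContDiffOn ℝ (⊤ : ℕ∞) u (Metric.ball 0 R))
    {s : ℝ} (hs : 0 < s) (hsR : s < R) :
    ∫ p in Metric.ball (0:E2) s, Df τ u p =
      (∫ p in Metric.ball (0:E2) s, W τ u p) - ∫ p in Metric.ball (0:E2) s, W0f τ p := by
  have hiW : IntegrableOn (W τ u) (Metric.ball (0:E2) s) :=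
    integrableOn_ball_of_contOn R (contOn_W τ R u hu) hsR
  have hiW0 : IntegrableOn (W0f τ) (Metric.ball (0:E2) s) :=
    integrableOn_ball_of_contOn R (cont_W0f τ).continuousOn hsR
  have hiA : IntegrableOn (A τ u) (Metric.ball (0:E2) s) :=
    integrableOn_ball_of_contOn R (contOn_A τ R u hu) hsR
  have hiA' : IntegrableOn (fun p => τ * A τ u p) (Metric.ball (0:E2) s) := hiA.const_mul τ
  have h1 : ∫ p in Metric.ball (0:E2) s, (W τ u p - (W0f τ p + τ * A τ u p)) =
      (∫ p in Metric.ball (0:E2) s, W τ u p) -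
        ∫ p in Metric.ball (0:E2) s, (W0f τ p + τ * A τ u p) :=
    integral_sub hiW (hiW0.add hiA')
  have h2 : ∫ p in Metric.ball (0:E2) s, (W0f τ p + τ * A τ u p) =
      (∫ p in Metric.ball (0:E2) s, W0f τ p) + ∫ p in Metric.ball (0:E2) s, τ * A τ u p :=
    integral_add hiW0 hiA'
  have h3 : ∫ p in Metric.ball (0:E2) s, τ * A τ u p = 0 := by
    rw [integral_const_mul, circulation τ R u hτ hR hu s hs hsR, mul_zero]
  simp only [Df]
  rw [h1, h2, h3, add_zero]

lemma ineq_ball (hτ : 0 < τ) (hR : 0 < R) (hu : ContDiffOn ℝ (⊤ : ℕ∞) u (Metric.ball 0 R))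
    {s : ℝ} (hs : 0 < s) (hsR : s < R) :
    ∫ p in Metric.ball (0:E2) s, W0f τ p ≤ ∫ p in Metric.ball (0:E2) s, W τ u p := by
  have h := decomp_ball τ R u hτ hR hu hs hsR
  have hnn : 0 ≤ ∫ p in Metric.ball (0:E2) s, Df τ u p :=
    setIntegral_nonneg Metric.isOpen_ball.measurableSet (fun p _ => Df_nonneg τ u p)
  linarith

end main

section limits

lemma seq_pos {R : ℝ} (hR : 0 < R) (n : ℕ) : 0 < R - R / (n + 2) := by
  have h2 : (0:ℝ) < (n:ℝ) + 2 := by positivity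
  have : R / ((n:ℝ) + 2) ≤ R / 2 := by
    apply div_le_div_of_nonneg_left hR.le (by norm_num)
    · norm_num
  linarith
  
lemma seq_lt {R : ℝ} (hR : 0 < R) (n : ℕ) : R - R / (n + 2) < R := by
  have h2 : (0:ℝ) < (n:ℝ) + 2 := by positivity
  have : 0 < R / ((n:ℝ) + 2) := by positivity
  linarith

lemma seq_mono {R : ℝ} (hR : 0 < R) : Monotone (fun n : ℕ => R - R / (n + 2)) := by
  intro n m hnm
  simp only
  have h2 : (0:ℝ) < (n:ℝ) + 2 := by positivity
  have hle : R / ((m:ℝ) + 2) ≤ R / ((n:ℝ) + 2) := by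
    apply div_le_div_of_nonneg_left hR.le h2
    exact_mod_cast by omega
  linarith

lemma seq_exists {R : ℝ} (hR : 0 < R) (x : ℝ) (hx : x < R) : ∃ n : ℕ, x < R - R / (n + 2) := by
  have hRx : 0 < R - x := by linarith
  obtain ⟨N, hN⟩ := exists_nat_gt (R / (R - x))
  refine ⟨N, ?_⟩
  have h2 : (0:ℝ) < (N:ℝ) + 2 := by positivity
  have key : R / ((N:ℝ) + 2) < R - x := by
    rw [div_lt_iff₀ h2]
    rw [div_lt_iff₀ hRx] at hN
    nlinarith
  linarith

lemma lintegral_ball_sup {R : ℝ} (hR : 0 < R) (h : E2 → ℝ) (hm : Measurable h) :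
    ∫⁻ p in Metric.ball (0:E2) R, ENNReal.ofReal (h p) =
      ⨆ n : ℕ, ∫⁻ p in Metric.ball (0:E2) (R - R / (n + 2)), ENNReal.ofReal (h p) := by
  set f : ℕ → E2 → ENNReal := fun n =>
    (Metric.ball (0:E2) (R - R / (n + 2))).indicator (fun p => ENNReal.ofReal (h p)) with hf
  have hfm : ∀ n, Measurable (f n) := fun n =>
    (ENNReal.measurable_ofReal.comp hm).indicator Metric.isOpen_ball.measurableSet
  have hmono : Monotone f := by
    intro n m hnm p
    exact Set.indicator_le_indicator_of_subset
      (Metric.ball_subset_ball (by have := seq_mono hR hnm; simpa using this))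
      (fun a => zero_le) p
  have hsup : ∀ p, (⨆ n, f n p) =
      (Metric.ball (0:E2) R).indicator (fun p => ENNReal.ofReal (h p)) p := by
    intro p
    by_cases hp : p ∈ Metric.ball (0:E2) R
    · rw [indicator_of_mem hp]
      apply le_antisymm
      · apply iSup_le
        intro n
        by_cases hpn : p ∈ Metric.ball (0:E2) (R - R / (n + 2))
        · simp only [hf]; rw [indicator_of_mem hpn]
        · simp only [hf]; rw [indicator_of_notMem hpn]; exact zero_le
      · obtain ⟨n, hn⟩ := seq_exists hR (dist p 0) (Metric.mem_ball.mp hp)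
        have hpn : p ∈ Metric.ball (0:E2) (R - R / (n + 2)) := Metric.mem_ball.mpr hn
        calc ENNReal.ofReal (h p) = f n p := by simp only [hf]; rw [indicator_of_mem hpn]
          _ ≤ ⨆ n, f n p := le_iSup (fun n => f n p) n
    · rw [indicator_of_notMem hp]
      apply le_antisymm ?_ (zero_le)
      apply iSup_le
      intro n
      have hpn : p ∉ Metric.ball (0:E2) (R - R / (n + 2)) := by
        intro hc
        exact hp (Metric.ball_subset_ball (seq_lt hR n).le hc)
      simp only [hf]; rw [indicator_of_notMem hpn]
  calc ∫⁻ p in Metric.ball (0:E2) R, ENNReal.ofReal (h p)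
      = ∫⁻ p, (Metric.ball (0:E2) R).indicator (fun p => ENNReal.ofReal (h p)) p :=
        (lintegral_indicator Metric.isOpen_ball.measurableSet _).symm
    _ = ∫⁻ p, ⨆ n, f n p := by
        congr 1
        funext p
        exact (hsup p).symm
    _ = ⨆ n, ∫⁻ p, f n p := lintegral_iSup hfm hmono
    _ = ⨆ n : ℕ, ∫⁻ p in Metric.ball (0:E2) (R - R / (n + 2)), ENNReal.ofReal (h p) := by
        congr 1
        funext n
        exact lintegral_indicator Metric.isOpen_ball.measurableSet _

lemma ofReal_setIntegral' {f : E2 → ℝ} {s : Set E2} (hi : IntegrableOn f s)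
    (hnn : ∀ p, 0 ≤ f p) :
    ∫⁻ p in s, ENNReal.ofReal (f p) = ENNReal.ofReal (∫ p in s, f p) :=
  (ofReal_integral_eq_lintegral_ofReal hi (ae_of_all _ hnn)).symm

end limits

/-- Graphs over a disk minimize area with free boundary on the vertical cylinder in
`Nil₃(τ)`: for any `u` smooth on `D_R(0)` and continuous on the closed disk,
`∫_{D_R(0)} W_u ≥ ∫_{D_R(0)} √(1 + τ²(x²+y²)) = (2π/(3τ²))((1+τ²R²)^{3/2} − 1)`,
with equality if and only if `u` is constant (i.e. the graph is a horizontal umbrella). -/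
theorem stmt7 (τ R : ℝ) (hτ : 0 < τ) (hR : 0 < R)
    (u : E2 → ℝ) (hu : ContDiffOn ℝ (⊤ : ℕ∞) u (Metric.ball 0 R))
    (hcont : ContinuousOn u (Metric.closedBall 0 R)) :
    (∫⁻ p in Metric.ball (0 : E2) R,
        ENNReal.ofReal (Real.sqrt (1 + τ ^ 2 * ((p 0) ^ 2 + (p 1) ^ 2)))) =
      ENNReal.ofReal ((2 * π / (3 * τ ^ 2)) * ((1 + τ ^ 2 * R ^ 2) ^ ((3 : ℝ) / 2) - 1)) ∧
    (∫⁻ p in Metric.ball (0 : E2) R,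
        ENNReal.ofReal (Real.sqrt (1 + τ ^ 2 * ((p 0) ^ 2 + (p 1) ^ 2)))) ≤
      (∫⁻ p in Metric.ball (0 : E2) R, ENNReal.ofReal (W τ u p)) ∧
    ((∫⁻ p in Metric.ball (0 : E2) R, ENNReal.ofReal (W τ u p)) =
        (∫⁻ p in Metric.ball (0 : E2) R,
          ENNReal.ofReal (Real.sqrt (1 + τ ^ 2 * ((p 0) ^ 2 + (p 1) ^ 2)))) ↔
      ∃ c : ℝ, ∀ p ∈ Metric.ball (0 : E2) R, u p = c) := by
  have hW0eq : ∀ p : E2, Real.sqrt (1 + τ ^ 2 * ((p 0) ^ 2 + (p 1) ^ 2)) = W0f τ p :=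
    fun p => rfl
  simp only [hW0eq]
  set B := Metric.ball (0 : E2) R with hB
  set sn : ℕ → ℝ := fun n => R - R / (n + 2) with hsn
  set Bn : ℕ → Set E2 := fun n => Metric.ball (0 : E2) (sn n) with hBn
  have hBnB : ∀ n, Bn n ⊆ B := fun n => Metric.ball_subset_ball (seq_lt hR n).le
  have hBnm : ∀ {n m : ℕ}, n ≤ m → Bn n ⊆ Bn m :=
    fun {n m} h => Metric.ball_subset_ball (seq_mono hR h)
  -- integrability facts
  have hiW0R : IntegrableOn (W0f τ) B := by
    exact (((cont_W0f τ).continuousOn (s := Metric.closedBall (0:E2) R)).integrableOn_compact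
      (isCompact_closedBall (0:E2) R)).mono_set Metric.ball_subset_closedBall
  have hiW0 : ∀ n, IntegrableOn (W0f τ) (Bn n) :=
    fun n => integrableOn_ball_of_contOn R (cont_W0f τ).continuousOn (seq_lt hR n)
  have hiW : ∀ n, IntegrableOn (W τ u) (Bn n) :=
    fun n => integrableOn_ball_of_contOn R (contOn_W τ R u hu) (seq_lt hR n)
  have hiA : ∀ n, IntegrableOn (A τ u) (Bn n) :=
    fun n => integrableOn_ball_of_contOn R (contOn_A τ R u hu) (seq_lt hR n)
  have hiDf : ∀ n, IntegrableOn (Df τ u) (Bn n) := by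
    intro n
    have : Df τ u = fun p => W τ u p - (W0f τ p + τ * A τ u p) := rfl
    rw [this]
    exact (hiW n).sub ((hiW0 n).add ((hiA n).const_mul τ))
  have hW0nn : ∀ p, 0 ≤ W0f τ p := fun p => Real.sqrt_nonneg _
  have hWnn : ∀ p, 0 ≤ W τ u p := fun p => Real.sqrt_nonneg _
  -- Part 1
  have h1 : ∫⁻ p in B, ENNReal.ofReal (W0f τ p) =
      ENNReal.ofReal ((2 * π / (3 * τ ^ 2)) * ((1 + τ ^ 2 * R ^ 2) ^ ((3 : ℝ) / 2) - 1)) := by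
    rw [ofReal_setIntegral' hiW0R hW0nn]
    congr 1
    exact integral_W0_ball τ R hτ hR
  refine ⟨h1, ?_, ?_⟩
  -- Part 2
  · rw [lintegral_ball_sup hR (W0f τ) (cont_W0f τ).measurable]
    apply iSup_le
    intro n
    calc ∫⁻ p in Bn n, ENNReal.ofReal (W0f τ p)
        = ENNReal.ofReal (∫ p in Bn n, W0f τ p) := ofReal_setIntegral' (hiW0 n) hW0nn
      _ ≤ ENNReal.ofReal (∫ p in Bn n, W τ u p) :=
          ENNReal.ofReal_le_ofReal (ineq_ball τ R u hτ hR hu (seq_pos hR n) (seq_lt hR n))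
      _ = ∫⁻ p in Bn n, ENNReal.ofReal (W τ u p) := (ofReal_setIntegral' (hiW n) hWnn).symm
      _ ≤ ∫⁻ p in B, ENNReal.ofReal (W τ u p) := lintegral_mono_set (hBnB n)
  -- Part 3
  constructor
  · -- equality → constant
    intro heq
    -- the defect function has zero integral on each Bn
    have hxn : ∀ n, ∫⁻ p in Bn n, ENNReal.ofReal (Df τ u p) = 0 := by
      intro n
      have hfin : (ENNReal.ofReal ((2 * π / (3 * τ ^ 2)) *
          ((1 + τ ^ 2 * R ^ 2) ^ ((3 : ℝ) / 2) - 1))) ≠ ⊤ := ENNReal.ofReal_ne_top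
      have hub : ∀ m, (∫⁻ p in Bn n, ENNReal.ofReal (Df τ u p)) +
          ∫⁻ p in Bn m, ENNReal.ofReal (W0f τ p) ≤
          ENNReal.ofReal ((2 * π / (3 * τ ^ 2)) * ((1 + τ ^ 2 * R ^ 2) ^ ((3 : ℝ) / 2) - 1)) := by
        intro m
        set k := max n m with hk
        have hDk : (∫⁻ p in Bn n, ENNReal.ofReal (Df τ u p)) ≤
            ∫⁻ p in Bn k, ENNReal.ofReal (Df τ u p) := lintegral_mono_set (hBnm (le_max_left n m))
        have hJk : (∫⁻ p in Bn m, ENNReal.ofReal (W0f τ p)) ≤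
            ∫⁻ p in Bn k, ENNReal.ofReal (W0f τ p) := lintegral_mono_set (hBnm (le_max_right n m))
        have hsum : (∫⁻ p in Bn k, ENNReal.ofReal (Df τ u p)) +
            ∫⁻ p in Bn k, ENNReal.ofReal (W0f τ p) =
            ∫⁻ p in Bn k, ENNReal.ofReal (W τ u p) := by
          rw [ofReal_setIntegral' (hiDf k) (Df_nonneg τ u), ofReal_setIntegral' (hiW0 k) hW0nn,
            ofReal_setIntegral' (hiW k) hWnn,
            ← ENNReal.ofReal_add (setIntegral_nonneg Metric.isOpen_ball.measurableSet
              (fun p _ => Df_nonneg τ u p)) (setIntegral_nonneg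
                Metric.isOpen_ball.measurableSet (fun p _ => hW0nn p))]
          congr 1
          have := decomp_ball τ R u hτ hR hu (seq_pos hR k) (seq_lt hR k)
          linarith
        calc (∫⁻ p in Bn n, ENNReal.ofReal (Df τ u p)) +
              ∫⁻ p in Bn m, ENNReal.ofReal (W0f τ p)
            ≤ (∫⁻ p in Bn k, ENNReal.ofReal (Df τ u p)) +
              ∫⁻ p in Bn k, ENNReal.ofReal (W0f τ p) := add_le_add hDk hJk
          _ = ∫⁻ p in Bn k, ENNReal.ofReal (W τ u p) := hsum
          _ ≤ ∫⁻ p in B, ENNReal.ofReal (W τ u p) := lintegral_mono_set (hBnB k)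
          _ = _ := by rw [heq, h1]
      have hsupJ : (⨆ m, ∫⁻ p in Bn m, ENNReal.ofReal (W0f τ p)) =
          ENNReal.ofReal ((2 * π / (3 * τ ^ 2)) * ((1 + τ ^ 2 * R ^ 2) ^ ((3 : ℝ) / 2) - 1)) := by
        rw [← lintegral_ball_sup hR (W0f τ) (cont_W0f τ).measurable, h1]
      have hfinal : (∫⁻ p in Bn n, ENNReal.ofReal (Df τ u p)) +
          ENNReal.ofReal ((2 * π / (3 * τ ^ 2)) * ((1 + τ ^ 2 * R ^ 2) ^ ((3 : ℝ) / 2) - 1)) ≤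
          ENNReal.ofReal ((2 * π / (3 * τ ^ 2)) *
            ((1 + τ ^ 2 * R ^ 2) ^ ((3 : ℝ) / 2) - 1)) := by
        conv_lhs => rw [← hsupJ]
        rw [ENNReal.add_iSup]
        exact iSup_le hub
      have hfinal' : (∫⁻ p in Bn n, ENNReal.ofReal (Df τ u p)) +
          ENNReal.ofReal ((2 * π / (3 * τ ^ 2)) * ((1 + τ ^ 2 * R ^ 2) ^ ((3 : ℝ) / 2) - 1)) ≤
          0 + ENNReal.ofReal ((2 * π / (3 * τ ^ 2)) *
            ((1 + τ ^ 2 * R ^ 2) ^ ((3 : ℝ) / 2) - 1)) := by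
        rwa [zero_add]
      exact le_zero_iff.mp (ENNReal.le_of_add_le_add_right hfin hfinal')
    -- hence the defect vanishes a.e., hence everywhere on B
    have hX : ∫⁻ p in B, ENNReal.ofReal (Df τ u p) = 0 := by
      rw [lintegral_ball_sup hR (Df τ u) (measurable_Df τ u)]
      exact le_antisymm (iSup_le fun n => (hxn n).le) zero_le
    have hae : ∀ᵐ p, p ∈ B → ENNReal.ofReal (Df τ u p) = 0 := by
      have := (lintegral_eq_zero_iff
        ((ENNReal.measurable_ofReal.comp (measurable_Df τ u)))).mp hX
      rw [Filter.EventuallyEq, ae_restrict_iff' Metric.isOpen_ball.measurableSet] at this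
      filter_upwards [this] with p hp hpB
      exact hp hpB
    have hnull : volume {p | ¬ (p ∈ B → ENNReal.ofReal (Df τ u p) = 0)} = 0 := by
      rw [← ae_iff]; exact hae
    -- the bad set is open and null, hence empty
    have hDfc : ContinuousOn (Df τ u) B := by
      have : Df τ u = fun p => W τ u p - (W0f τ p + τ * A τ u p) := rfl
      rw [this]
      exact (contOn_W τ R u hu).sub ((cont_W0f τ).continuousOn.add
        (continuousOn_const.mul (contOn_A τ R u hu)))
    have hDf0 : ∀ p ∈ B, Df τ u p = 0 := by
      by_contra hcon
      push_neg at hcon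
      obtain ⟨p0, hp0B, hp0⟩ := hcon
      have hSopen : IsOpen (B ∩ (Df τ u) ⁻¹' (Ioi 0)) :=
        hDfc.isOpen_inter_preimage Metric.isOpen_ball isOpen_Ioi
      have hp0S : p0 ∈ B ∩ (Df τ u) ⁻¹' (Ioi 0) :=
        ⟨hp0B, lt_of_le_of_ne (Df_nonneg τ u p0) (Ne.symm hp0)⟩
      have hpos := hSopen.measure_pos volume ⟨p0, hp0S⟩
      have hsub : B ∩ (Df τ u) ⁻¹' (Ioi 0) ⊆
          {p | ¬ (p ∈ B → ENNReal.ofReal (Df τ u p) = 0)} := by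
        rintro p ⟨hpB, hpD⟩
        simp only [mem_setOf_eq, Classical.not_imp]
        exact ⟨hpB, by
          rw [← ENNReal.ofReal_zero]
          exact fun hc => absurd (ENNReal.ofReal_pos.mpr hpD) (by simp [hc])⟩
      exact absurd (measure_mono_null hsub hnull) hpos.ne'
    -- derivative vanishes on B
    have hpd : ∀ p ∈ B, pd 0 u p = 0 ∧ pd 1 u p = 0 := by
      intro p hp
      apply calib_eq τ u p _ hτ
      have := hDf0 p hp
      simp only [Df, W0f] at this ⊢
      linarith
    have hfd : ∀ p ∈ B, fderiv ℝ u p = 0 := by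
      intro p hp
      ext v
      have hv : Cq (v 0, v 1) = v := Cq_Phi v
      calc fderiv ℝ u p v = fderiv ℝ u p (Cq (v 0, v 1)) := by rw [hv]
        _ = v 0 * pd 0 u p + v 1 * pd 1 u p := fderiv_apply_Cq u p (v 0, v 1)
        _ = 0 := by rw [(hpd p hp).1, (hpd p hp).2]; ring
        _ = (0 : E2 →L[ℝ] ℝ) v := by simp
    refine ⟨u 0, fun p hp => ?_⟩
    have hdiff : DifferentiableOn ℝ u B := hu.differentiableOn (by simp)
    have hbound : ∀ x ∈ B, ‖fderivWithin ℝ u B x‖ ≤ 0 := by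
      intro x hx
      rw [fderivWithin_of_isOpen Metric.isOpen_ball hx, hfd x hx]
      simp
    have h0B : (0 : E2) ∈ B := Metric.mem_ball_self hR
    have := (convex_ball (0:E2) R).norm_image_sub_le_of_norm_fderivWithin_le
      hdiff hbound h0B hp
    simp only [zero_mul] at this
    have : ‖u p - u 0‖ ≤ 0 := this
    have := norm_le_zero_iff.mp this
    linarith [sub_eq_zero.mp this]
  · -- constant → equality
    rintro ⟨c, hc⟩
    apply setLIntegral_congr_fun Metric.isOpen_ball.measurableSet
    intro p hp
    have hev : u =ᶠ[nhds p] (fun _ => c) :=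
      Filter.eventuallyEq_of_mem (Metric.isOpen_ball.mem_nhds hp) (fun q hq => hc q hq)
    have hfd : fderiv ℝ u p = 0 := by
      rw [hev.fderiv_eq]
      exact fderiv_const_apply c
    have hpd0 : pd 0 u p = 0 := by simp [pd, hfd]
    have hpd1 : pd 1 u p = 0 := by simp [pd, hfd]
    congr 1
    simp only [W, G1, G2, hpd0, hpd1, zero_add, zero_sub, W0f]
    congr 1
    ring
end
end

section
/- Let n ≥ 1. For p ∈ ℝⁿ set W_p = √(1 + |p|²) and N_p = (−p, 1)/W_p ∈ ℝⁿ⁺¹ (a unit vector). Then for all p, q ∈ ℝⁿ, ⟨p/W_p − q/W_q, p − q⟩ = (1/2)·(W_p + W_q)·‖N_p − N_q‖² ≥ 0, and equality holds at a pair (p, q) if and only if p = q. -/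
open scoped RealInnerProductSpace

noncomputable section

/-- The key pointwise algebraic identity behind the Collin–Krust type estimates
(Leandro–Rosenberg): for `p, q ∈ ℝⁿ` with `W_p = √(1+|p|²)` and unit vectors
`N_p = (−p, 1)/W_p ∈ ℝⁿ⁺¹`, one has
`⟨p/W_p − q/W_q, p − q⟩ = ½(W_p + W_q)‖N_p − N_q‖² ≥ 0`,
with equality if and only if `p = q`. -/
theorem stmt18 (n : ℕ) (hn : 1 ≤ n)
    (W : EuclideanSpace ℝ (Fin n) → ℝ)
    (hW : ∀ p : EuclideanSpace ℝ (Fin n), W p = Real.sqrt (1 + ‖p‖ ^ 2))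
    (N : EuclideanSpace ℝ (Fin n) → WithLp 2 (EuclideanSpace ℝ (Fin n) × ℝ))
    (hN : ∀ p : EuclideanSpace ℝ (Fin n),
      N p = (WithLp.equiv 2 (EuclideanSpace ℝ (Fin n) × ℝ)).symm
        ((W p)⁻¹ • (-p), (W p)⁻¹)) :
    ∀ p q : EuclideanSpace ℝ (Fin n),
      ⟪(W p)⁻¹ • p - (W q)⁻¹ • q, p - q⟫ =
        (1 / 2) * (W p + W q) * ‖N p - N q‖ ^ 2 ∧
      (0 : ℝ) ≤ ⟪(W p)⁻¹ • p - (W q)⁻¹ • q, p - q⟫ ∧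
      (⟪(W p)⁻¹ • p - (W q)⁻¹ • q, p - q⟫ = (0 : ℝ) ↔ p = q) := by
  intro p q
  have hwp0 : 0 < W p := by
    rw [hW]; positivity
  have hwq0 : 0 < W q := by
    rw [hW]; positivity
  have hwp2 : W p ^ 2 = 1 + ‖p‖ ^ 2 := by
    rw [hW]; exact Real.sq_sqrt (by positivity)
  have hwq2 : W q ^ 2 = 1 + ‖q‖ ^ 2 := by
    rw [hW]; exact Real.sq_sqrt (by positivity)
  -- frequently used abbreviations
  set a : ℝ := ‖p‖ ^ 2 with ha
  set b : ℝ := ‖q‖ ^ 2 with hb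
  set t : ℝ := ⟪p, q⟫ with ht
  -- LHS computation
  have hpp : ⟪p, p⟫ = a := real_inner_self_eq_norm_sq p
  have hqq : ⟪q, q⟫ = b := real_inner_self_eq_norm_sq q
  have hqp : ⟪q, p⟫ = t := real_inner_comm p q
  have hLHS : ⟪(W p)⁻¹ • p - (W q)⁻¹ • q, p - q⟫ =
      (W p)⁻¹ * (a - t) + (W q)⁻¹ * (b - t) := by
    rw [inner_sub_left, inner_sub_right, inner_sub_right,
      real_inner_smul_left, real_inner_smul_left, real_inner_smul_left,
      real_inner_smul_left, hpp, hqq, hqp, ← ht]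
    ring
  -- norm of N p - N q
  have hfst : (N p - N q).fst = (W p)⁻¹ • (-p) - (W q)⁻¹ • (-q) := by
    rw [WithLp.sub_fst, hN, hN]; rfl
  have hsnd : (N p - N q).snd = (W p)⁻¹ - (W q)⁻¹ := by
    rw [WithLp.sub_snd, hN, hN]; rfl
  have hnormN : ‖N p - N q‖ ^ 2 =
      ((W p)⁻¹ ^ 2 * a + (W q)⁻¹ ^ 2 * b - 2 * (W p)⁻¹ * (W q)⁻¹ * t)
      + ((W p)⁻¹ - (W q)⁻¹) ^ 2 := by
    rw [← real_inner_self_eq_norm_sq, WithLp.prod_inner_apply]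
    change ⟪(N p - N q).fst, (N p - N q).fst⟫ + ⟪(N p - N q).snd, (N p - N q).snd⟫ = _
    rw [hfst, hsnd]
    rw [inner_sub_left, inner_sub_right, inner_sub_right,
      real_inner_smul_left, real_inner_smul_left, real_inner_smul_left,
      real_inner_smul_left, real_inner_smul_right, real_inner_smul_right,
      real_inner_smul_right, real_inner_smul_right,
      inner_neg_neg, inner_neg_neg, inner_neg_neg, inner_neg_neg,
      hpp, hqq, hqp, ← ht]
    have : ⟪((W p)⁻¹ - (W q)⁻¹ : ℝ), ((W p)⁻¹ - (W q)⁻¹ : ℝ)⟫ =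
        ((W p)⁻¹ - (W q)⁻¹) ^ 2 := by
      rw [real_inner_self_eq_norm_sq, Real.norm_eq_abs, sq_abs]
    rw [this]
    ring
  have hwp0' : W p ≠ 0 := ne_of_gt hwp0
  have hwq0' : W q ≠ 0 := ne_of_gt hwq0
  have ha' : a = W p ^ 2 - 1 := by rw [hwp2]; ring
  have hb' : b = W q ^ 2 - 1 := by rw [hwq2]; ring
  -- main identity
  have hmain : ⟪(W p)⁻¹ • p - (W q)⁻¹ • q, p - q⟫ =
      (1 / 2) * (W p + W q) * ‖N p - N q‖ ^ 2 := by
    rw [hLHS, hnormN, ha', hb']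
    field_simp
    ring
  refine ⟨hmain, ?_, ?_⟩
  · rw [hmain]
    positivity
  · constructor
    · intro h0
      rw [hmain] at h0
      have hsq : ‖N p - N q‖ ^ 2 = 0 := by
        by_contra hne
        have hz : (1 / 2) * (W p + W q) = 0 := by
          rcases mul_eq_zero.mp h0 with h | h
          · exact h
          · exact absurd h hne
        nlinarith
      have hNN : N p = N q :=
        sub_eq_zero.mp (norm_eq_zero.mp ((pow_eq_zero_iff (two_ne_zero)).mp hsq))
      have hsndEq : (W p)⁻¹ = (W q)⁻¹ := by
        have := congrArg (fun x : WithLp 2 (EuclideanSpace ℝ (Fin n) × ℝ) => x.snd) hNN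
        simpa [hN, WithLp.equiv_symm_apply] using this
      have hWeq : W p = W q := by
        field_simp at hsndEq; exact hsndEq.symm
      have hfstEq : (W p)⁻¹ • (-p) = (W q)⁻¹ • (-q) := by
        have := congrArg (fun x : WithLp 2 (EuclideanSpace ℝ (Fin n) × ℝ) => x.fst) hNN
        simpa [hN, WithLp.equiv_symm_apply] using this
      rw [hWeq] at hfstEq
      have := smul_right_injective (EuclideanSpace ℝ (Fin n)) (inv_ne_zero hwq0') hfstEq
      exact neg_injective this
    · intro h; rw [h]; simp
end
end

section
/- Fix τ > 0 and θ ∈ ℝ, and define f_θ : ℝ² → ℝ by f_θ(x,y) = τxy + (sinh θ/(4τ))·(2τy·√(1 + 4τ²y²) + arcsinh(2τy)). Then f_θ satisfies the minimal graph equation div(Gf_θ/W_{f_θ}) = 0 on all of ℝ²; that is, the graph of f_θ is an entire minimal graph in the Heisenberg group Nil₃(τ) (the Figueroa–Mercuri–Pedrosa invariant surface Σ_θ). -/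
open MeasureTheory Real Filter

noncomputable section

-- auxiliary
def sfun (τ y : ℝ) : ℝ := Real.sqrt (1 + 4 * τ ^ 2 * y ^ 2)

lemma sfun_arg_pos (τ y : ℝ) : 0 < 1 + 4 * τ ^ 2 * y ^ 2 := by positivity

lemma sfun_pos (τ y : ℝ) : 0 < sfun τ y := Real.sqrt_pos.2 (sfun_arg_pos τ y)

lemma sfun_sq (τ y : ℝ) : sfun τ y ^ 2 = 1 + 4 * τ ^ 2 * y ^ 2 :=
  Real.sq_sqrt (sfun_arg_pos τ y).le

lemma hasDerivAt_sfun (τ y : ℝ) :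
    HasDerivAt (sfun τ) (4 * τ ^ 2 * y / sfun τ y) y := by
  have h1 : HasDerivAt (fun y : ℝ => 1 + 4 * τ ^ 2 * y ^ 2) (8 * τ ^ 2 * y) y := by
    have := ((hasDerivAt_pow 2 y).const_mul (4 * τ ^ 2)).const_add 1
    exact this.congr_deriv (by ring)
  have h2 := (Real.hasDerivAt_sqrt (x := 1 + 4 * τ ^ 2 * y ^ 2) (sfun_arg_pos τ y).ne').comp y h1
  have hs := (sfun_pos τ y).ne'
  refine h2.congr_deriv ?_
  field_simp [sfun]
  simp only [sfun]; ring

lemma hasDerivAt_g (τ θ y : ℝ) (hτ : 0 < τ) :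
    HasDerivAt (fun y => Real.sinh θ / (4 * τ) *
      (2 * τ * y * sfun τ y + Real.arsinh (2 * τ * y)))
      (Real.sinh θ * sfun τ y) y := by
  have hs := sfun_pos τ y
  have hlin : HasDerivAt (fun y : ℝ => 2 * τ * y) (2 * τ) y := by
    simpa using (hasDerivAt_id y).const_mul (2 * τ)
  have h1 : HasDerivAt (fun y => 2 * τ * y * sfun τ y)
      (2 * τ * sfun τ y + 2 * τ * y * (4 * τ ^ 2 * y / sfun τ y)) y := by
    exact hlin.mul (hasDerivAt_sfun τ y)
  have h2 : HasDerivAt (fun y => Real.arsinh (2 * τ * y))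
      ((Real.sqrt (1 + (2 * τ * y) ^ 2))⁻¹ * (2 * τ)) y :=
    (Real.hasDerivAt_arsinh (2 * τ * y)).comp y hlin
  have hsq : Real.sqrt (1 + (2 * τ * y) ^ 2) = sfun τ y := by
    congr 1; ring
  rw [hsq] at h2
  have := ((h1.add h2).const_mul (Real.sinh θ / (4 * τ)))
  refine this.congr_deriv ?_
  have hs2 := sfun_sq τ y
  have key : 2 * τ * sfun τ y + 2 * τ * y * (4 * τ ^ 2 * y / sfun τ y) + (sfun τ y)⁻¹ * (2 * τ)
      = 4 * τ * sfun τ y := by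
    field_simp
    linear_combination (-2) * hs2
  rw [key]
  field_simp [hτ.ne']
  try ring


set_option maxHeartbeats 1600000 in
/-- The Figueroa–Mercuri–Pedrosa invariant surfaces: for every `θ ∈ ℝ`, the function
`f_θ(x,y) = τxy + (sinh θ/(4τ))(2τy√(1+4τ²y²) + arcsinh(2τy))` satisfies the minimal
graph equation on all of `ℝ²`, i.e. its graph is an entire minimal graph in `Nil₃(τ)`. -/
theorem stmt19 (τ θ : ℝ) (hτ : 0 < τ) (f : E2 → ℝ)
    (hf : ∀ p : E2, f p = τ * p 0 * p 1 +
      Real.sinh θ / (4 * τ) *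
        (2 * τ * p 1 * Real.sqrt (1 + 4 * τ ^ 2 * (p 1) ^ 2) +
          Real.arsinh (2 * τ * p 1))) :
    MinimalGraphNil τ f Set.univ := by
  obtain rfl : f = fun p => τ * p 0 * p 1 +
      Real.sinh θ / (4 * τ) *
        (2 * τ * p 1 * sfun τ (p 1) + Real.arsinh (2 * τ * p 1)) := by
    funext p; rw [hf p, sfun]
  set c := Real.sinh θ / (4 * τ) with hc
  -- fderiv of f
  have hcoe : ∀ i : Fin 2, (fun q : E2 => q i) = ⇑(EuclideanSpace.proj i : E2 →L[ℝ] ℝ) := by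
    intro i; funext q; simp
  have hproj : ∀ (i : Fin 2) (p : E2), HasFDerivAt (fun q : E2 => q i)
      ((EuclideanSpace.proj i : E2 →L[ℝ] ℝ)) p := by
    intro i p
    rw [hcoe i]
    exact (EuclideanSpace.proj i : E2 →L[ℝ] ℝ).hasFDerivAt
  have hfd : ∀ p : E2, HasFDerivAt (fun q : E2 => τ * q 0 * q 1 +
      c * (2 * τ * q 1 * sfun τ (q 1) + Real.arsinh (2 * τ * q 1)))
      ((τ * p 1) • (EuclideanSpace.proj (0 : Fin 2) : E2 →L[ℝ] ℝ) + (τ * p 0) • (EuclideanSpace.proj (1 : Fin 2) : E2 →L[ℝ] ℝ)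
        + (Real.sinh θ * sfun τ (p 1)) • (EuclideanSpace.proj (1 : Fin 2) : E2 →L[ℝ] ℝ)) p := by
    intro p
    have hmul : HasFDerivAt (fun q : E2 => τ * q 0 * q 1)
        ((τ * p 1) • (EuclideanSpace.proj (0 : Fin 2) : E2 →L[ℝ] ℝ) + (τ * p 0) • (EuclideanSpace.proj (1 : Fin 2) : E2 →L[ℝ] ℝ)) p := by
      have := (((hproj 0 p).const_mul τ).mul (hproj 1 p))
      refine this.congr_fderiv ?_
      simp only [smul_smul]
      module
    have hg : HasFDerivAt (fun q : E2 => c * (2 * τ * q 1 * sfun τ (q 1) + Real.arsinh (2 * τ * q 1)))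
        ((Real.sinh θ * sfun τ (p 1)) • (EuclideanSpace.proj (1 : Fin 2) : E2 →L[ℝ] ℝ)) p :=
      by have := (hasDerivAt_g τ θ (p 1) hτ).comp_hasFDerivAt p (hproj 1 p); exact this
    exact hmul.add hg
  have hsingle : ∀ i j : Fin 2, (EuclideanSpace.proj i : E2 →L[ℝ] ℝ) (EuclideanSpace.single j (1:ℝ))
      = if j = i then 1 else 0 := by
    intro i j
    simp [EuclideanSpace.single_apply, eq_comm]
  have hpd0 : ∀ p : E2, pd 0 (fun q : E2 => τ * q 0 * q 1 +
      c * (2 * τ * q 1 * sfun τ (q 1) + Real.arsinh (2 * τ * q 1))) p = τ * p 1 := by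
    intro p
    rw [pd, (hfd p).fderiv]
    simp [hsingle]
  have hpd1 : ∀ p : E2, pd 1 (fun q : E2 => τ * q 0 * q 1 +
      c * (2 * τ * q 1 * sfun τ (q 1) + Real.arsinh (2 * τ * q 1))) p
      = τ * p 0 + Real.sinh θ * sfun τ (p 1) := by
    intro p
    rw [pd, (hfd p).fderiv]
    simp [hsingle]
  set F : E2 → ℝ := fun q => τ * q 0 * q 1 +
      c * (2 * τ * q 1 * sfun τ (q 1) + Real.arsinh (2 * τ * q 1)) with hF
  have hG1 : ∀ p : E2, G1 τ F p = 2 * τ * p 1 := by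
    intro p; rw [G1, hpd0]; ring
  have hG2 : ∀ p : E2, G2 τ F p = Real.sinh θ * sfun τ (p 1) := by
    intro p; rw [G2, hpd1]; ring
  have hW : ∀ p : E2, W τ F p = Real.cosh θ * sfun τ (p 1) := by
    intro p
    rw [W, hG1, hG2]
    have h1 : 1 + ((2 * τ * p 1) ^ 2 + (Real.sinh θ * sfun τ (p 1)) ^ 2)
        = (Real.cosh θ * sfun τ (p 1)) ^ 2 := by
      have := sfun_sq τ (p 1)
      have hch := Real.cosh_sq θ
      nlinarith [this, hch]
    rw [h1, Real.sqrt_sq (mul_nonneg (Real.cosh_pos θ).le (sfun_pos τ (p 1)).le)]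
  intro p _
  -- second term: G2/W is constant tanh θ
  have hconst : (fun q => G2 τ F q / W τ F q) = fun _ : E2 => Real.tanh θ := by
    funext q
    rw [hG2, hW, Real.tanh_eq_sinh_div_cosh]
    rw [div_eq_div_iff (mul_pos (Real.cosh_pos θ) (sfun_pos τ (q 1))).ne' (Real.cosh_pos θ).ne']
    ring
  have hterm2 : pd 1 (fun q => G2 τ F q / W τ F q) p = 0 := by
    rw [hconst, pd, fderiv_fun_const]
    simp
  -- first term: G1/W depends only on q 1
  have hfun1 : (fun q => G1 τ F q / W τ F q)
      = fun q : E2 => 2 * τ * q 1 / (Real.cosh θ * sfun τ (q 1)) := by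
    funext q; rw [hG1, hW]
  have hterm1 : pd 0 (fun q => G1 τ F q / W τ F q) p = 0 := by
    rw [hfun1, pd]
    have hden : ∀ y : ℝ, Real.cosh θ * sfun τ y ≠ 0 := fun y =>
      (mul_pos (Real.cosh_pos θ) (sfun_pos τ y)).ne'
    have hh : HasDerivAt (fun y : ℝ => 2 * τ * y / (Real.cosh θ * sfun τ y))
        ((2 * τ * (Real.cosh θ * sfun τ (p 1)) - 2 * τ * (p 1) *
          (Real.cosh θ * (4 * τ ^ 2 * (p 1) / sfun τ (p 1)))) /
          (Real.cosh θ * sfun τ (p 1)) ^ 2) (p 1) := by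
      have hnum : HasDerivAt (fun y : ℝ => 2 * τ * y) (2 * τ) (p 1) := by
        simpa using (hasDerivAt_id (p 1)).const_mul (2 * τ)
      exact hnum.div ((hasDerivAt_sfun τ (p 1)).const_mul (Real.cosh θ)) (hden (p 1))
    have hcomp : HasFDerivAt (fun q : E2 => 2 * τ * q 1 / (Real.cosh θ * sfun τ (q 1)))
        (((2 * τ * (Real.cosh θ * sfun τ (p 1)) - 2 * τ * (p 1) *
          (Real.cosh θ * (4 * τ ^ 2 * (p 1) / sfun τ (p 1)))) /
          (Real.cosh θ * sfun τ (p 1)) ^ 2) • (EuclideanSpace.proj (1 : Fin 2) : E2 →L[ℝ] ℝ)) p :=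
      by have := hh.comp_hasFDerivAt p (hproj 1 p); exact this
    rw [hcomp.fderiv]
    simp [hsingle]
  rw [hterm1, hterm2]
  ring
end
end
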